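/- Let q, m11, m12, m22 be natural numbers with m11 ≤ q, m12 ≤ q, m22 ≤ q, and let J be the q×q down-shift matrix over 𝔽₂ (J(i, j) = 1 iff i = j + 1). Then the 2q×2q block matrix with block rows [J^(q−m11), J^(q−m12)] and [0, J^(q−m22)] (block upper-triangular, zero block in the lower-left) has rank equal to max(m11 + m22, m12) over 𝔽₂. -/

import Mathlib

/-!
Write `S k = J ^ k` for the `k`-fold down-shift; then `S k * S l = S (k + l)` and
`rank (S k) = q - k`. With `a, b, c` the three exponents and `d = min a (min b c)`, block row and
column operations bring `[[S a, S b], [0, S c]]` to `S d` and `S (a + c - d)` in complementary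
blocks (the Smith normal form of `[[x^a, x^b], [0, x^c]]` over `K[x]`), so the rank is
`(q - d) + (q - (a + c - d))`, which is `max (m11 + m22) m12`.
-/

open Matrix

section BlockRank

variable {R K : Type*} [CommRing R] [Field K] {m n m' n' : Type*}

theorem Submodule.finrank_prod {V W : Type*} [AddCommGroup V] [Module K V] [AddCommGroup W]
    [Module K W] [FiniteDimensional K V] [FiniteDimensional K W]
    (p : Submodule K V) (q : Submodule K W) :
    Module.finrank K (p.prod q) = Module.finrank K p + Module.finrank K q := by
  let e : p.prod q ≃ₗ[K] p × q :=
    { toFun x := (⟨x.1.1, x.2.1⟩, ⟨x.1.2, x.2.2⟩)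
      invFun y := ⟨(y.1, y.2), y.1.2, y.2.2⟩
      map_add' _ _ := rfl
      map_smul' _ _ := rfl
      left_inv _ := rfl
      right_inv _ := rfl }
  rw [e.finrank_eq, Module.finrank_prod]

theorem Matrix.rank_fromBlocks_zero₁₂_zero₂₁ [Fintype m] [Fintype m'] [Fintype n] [Fintype n']
    (A : Matrix m n K) (D : Matrix m' n' K) :
    (fromBlocks A 0 0 D).rank = A.rank + D.rank := by
  let e := LinearEquiv.sumArrowLequivProdArrow m m' K K
  let e' := LinearEquiv.sumArrowLequivProdArrow n n' K K
  have h : (fromBlocks A 0 0 D).mulVecLin =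
      e.symm.toLinearMap ∘ₗ A.mulVecLin.prodMap D.mulVecLin ∘ₗ e'.toLinearMap := by
    refine LinearMap.ext fun v => funext fun i => ?_
    rcases i with i | i <;>
      simp only [e, e', mulVecLin_apply, fromBlocks_mulVec, zero_mulVec, add_zero, zero_add,
        Sum.elim_inl, Sum.elim_inr, LinearMap.coe_comp, LinearEquiv.coe_coe, Function.comp_apply,
        LinearMap.prodMap_apply, LinearEquiv.sumArrowLequivProdArrow_symm_apply_inl,
        LinearEquiv.sumArrowLequivProdArrow_symm_apply_inr] <;> rfl
  rw [rank, h, LinearMap.range_comp, LinearMap.range_comp, LinearEquiv.range, Submodule.map_top,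
    LinearMap.range_prodMap, LinearEquiv.finrank_map_eq, Submodule.finrank_prod]
  rfl

theorem Matrix.rank_fromBlocks_zero₁₁_zero₂₂ [Fintype m] [Fintype m'] [Fintype n] [Fintype n']
    (B : Matrix m n' K) (C : Matrix m' n K) :
    (fromBlocks 0 B C 0).rank = B.rank + C.rank := by
  rw [← rank_submatrix _ (Equiv.refl _) (Equiv.sumComm n' n)]
  simpa using rank_fromBlocks_zero₁₂_zero₂₁ B C

theorem Matrix.rank_fromBlocks_zero₂₁_of_eq_mul_left [Fintype n] [Fintype n'] [DecidableEq n]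
    [DecidableEq n'] (A : Matrix m n R) (B : Matrix m n' R) (D : Matrix m' n' R)
    (X : Matrix n n' R) (hB : B = A * X) :
    (fromBlocks A B 0 D).rank = (fromBlocks A 0 0 D).rank := by
  have hdet : IsUnit (fromBlocks 1 (-X) 0 1 : Matrix (n ⊕ n') (n ⊕ n') R).det := by simp
  rw [← rank_mul_eq_left_of_isUnit_det _ _ hdet, fromBlocks_multiply]
  simp [hB]

theorem Matrix.rank_fromBlocks_zero₂₁_of_eq_mul_right [Fintype m] [Fintype m'] [Fintype n]
    [Fintype n'] [DecidableEq m] [DecidableEq m'] (A : Matrix m n R) (B : Matrix m n' R)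
    (D : Matrix m' n' R) (X : Matrix m m' R) (hB : B = X * D) :
    (fromBlocks A B 0 D).rank = (fromBlocks A 0 0 D).rank := by
  have hdet : IsUnit (fromBlocks 1 (-X) 0 1 : Matrix (m ⊕ m') (m ⊕ m') R).det := by simp
  rw [← rank_mul_eq_right_of_isUnit_det _ _ hdet, fromBlocks_multiply]
  simp [hB]

theorem Matrix.rank_fromBlocks_zero₂₁_of_eq_mul_of_eq_mul [Fintype m] [Fintype m'] [Fintype n]
    [Fintype n'] [DecidableEq m] [DecidableEq m'] [DecidableEq n] [DecidableEq n']
    (A : Matrix m n R) (B : Matrix m n' R) (D : Matrix m' n' R) (X : Matrix n' n R)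
    (Y : Matrix m' m R) (hA : A = B * X) (hD : D = Y * B) :
    (fromBlocks A B 0 D).rank = (fromBlocks 0 B (D * X) 0).rank := by
  have hcol : IsUnit (fromBlocks (-1) 0 X 1 : Matrix (n ⊕ n') (n ⊕ n') R).det := by
    simp [det_neg, isUnit_neg_one.pow]
  have hrow : IsUnit (fromBlocks 1 0 (-Y) 1 : Matrix (m ⊕ m') (m ⊕ m') R).det := by simp
  rw [← rank_mul_eq_left_of_isUnit_det _ _ hcol, ← rank_mul_eq_right_of_isUnit_det _ _ hrow,
    fromBlocks_multiply, fromBlocks_multiply]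
  simp [hA, hD, Matrix.mul_assoc]

end BlockRank

namespace PEquiv

variable {m n α K : Type*}

theorem toMatrix_ofSet [DecidableEq m] [Zero α] [One α] (s : Set m) [DecidablePred (· ∈ s)] :
    ((ofSet s).toMatrix : Matrix m m α) = diagonal fun i => if i ∈ s then 1 else 0 := by
  ext i j
  simp only [toMatrix_apply, diagonal_apply, mem_ofSet_iff]
  split_ifs <;> simp_all

theorem ofSet_isSome_trans (f : m ≃. n) : (ofSet {a | (f a).isSome}).trans f = f := by
  ext a b
  by_cases h : (f a).isSome <;> simp_all [PEquiv.trans, ofSet]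

theorem rank_toMatrix [Field K] [Fintype m] [Fintype n] [DecidableEq m] [DecidableEq n]
    (f : m ≃. n) : (f.toMatrix : Matrix m n K).rank = Fintype.card {a // (f a).isSome} := by
  -- `f.trans f.symm` is the identity on the domain of `f`, so `f.toMatrix` and the diagonal
  -- matrix `(f.trans f.symm).toMatrix` are each a multiple of the other.
  have hfactor : (f.toMatrix : Matrix m n K) = (f.trans f.symm).toMatrix * f.toMatrix := by
    conv_lhs => rw [← ofSet_isSome_trans f, ← self_trans_symm]
    exact toMatrix_trans _ _
  have hrank : (f.toMatrix : Matrix m n K).rank = ((f.trans f.symm).toMatrix : Matrix m m K).rank :=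
    le_antisymm ((congrArg rank hfactor).trans_le (rank_mul_le_left _ _))
      ((congrArg rank (toMatrix_trans f f.symm)).trans_le (rank_mul_le_left _ _))
  classical
  rw [hrank, self_trans_symm, toMatrix_ofSet, rank_diagonal]
  exact Fintype.card_congr (Equiv.subtypeEquivRight fun a => by simp [Option.isSome_iff_ne_none])

end PEquiv

def Fin.shiftPEquiv (q k : ℕ) : Fin q ≃. Fin q where
  toFun i := if h : k ≤ i then some ⟨i - k, by omega⟩ else none
  invFun j := if h : j + k < q then some ⟨j + k, h⟩ else none
  inv i j := by
    split_ifs <;> simp [Fin.ext_iff] <;> omega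

namespace Fin

theorem mem_shiftPEquiv {q k : ℕ} {i j : Fin q} : j ∈ shiftPEquiv q k i ↔ (i : ℕ) = j + k := by
  simp only [shiftPEquiv, PEquiv.coe_mk]
  split_ifs <;> simp [Fin.ext_iff] <;> omega

theorem shiftPEquiv_trans (q k l : ℕ) :
    (shiftPEquiv q k).trans (shiftPEquiv q l) = shiftPEquiv q (k + l) := by
  ext i j
  simp only [← Option.mem_def, PEquiv.mem_trans, mem_shiftPEquiv]
  constructor
  · rintro ⟨c, hc, hj⟩
    omega
  · intro h
    exact ⟨⟨j + l, by omega⟩, by dsimp only; omega, rfl⟩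

theorem card_isSome_shiftPEquiv (q k : ℕ) :
    Fintype.card {i // (shiftPEquiv q k i).isSome} = q - k := by
  have hdom : ∀ i : Fin q, (shiftPEquiv q k i).isSome ↔ ¬ (i : ℕ) < k := by
    simp [shiftPEquiv]
  simp_rw [hdom]
  rw [Fintype.card_subtype_compl, Fintype.card_fin, Fintype.card_subtype, Fin.card_filter_val_lt]
  omega

end Fin

section ShiftMatrix

variable (R : Type*) [Semiring R]

def shiftMatrix (q k : ℕ) : Matrix (Fin q) (Fin q) R := (Fin.shiftPEquiv q k).toMatrix

variable {R}

theorem shiftMatrix_apply (q k : ℕ) (i j : Fin q) :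
    shiftMatrix R q k i j = if (i : ℕ) = j + k then 1 else 0 := by
  simp only [shiftMatrix, PEquiv.toMatrix_apply, Fin.mem_shiftPEquiv]

theorem shiftMatrix_mul (q k l : ℕ) :
    shiftMatrix R q k * shiftMatrix R q l = shiftMatrix R q (k + l) :=
  (PEquiv.toMatrix_trans _ _).symm.trans (congrArg PEquiv.toMatrix (Fin.shiftPEquiv_trans q k l))

theorem pow_eq_shiftMatrix {q : ℕ} {J : Matrix (Fin q) (Fin q) R}
    (hJ : ∀ i j : Fin q, J i j = if (i : ℕ) = j + 1 then 1 else 0) (k : ℕ) :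
    J ^ k = shiftMatrix R q k := by
  have hJ1 : J = shiftMatrix R q 1 := by
    ext i j
    rw [hJ, shiftMatrix_apply]
  induction k with
  | zero => ext i j; simp [shiftMatrix_apply, one_apply, Fin.ext_iff]
  | succ k ih => rw [pow_succ, ih, hJ1, shiftMatrix_mul]

variable {K : Type*} [Field K]

theorem rank_shiftMatrix (q k : ℕ) : (shiftMatrix K q k).rank = q - k := by
  rw [shiftMatrix, PEquiv.rank_toMatrix, Fin.card_isSome_shiftPEquiv]

theorem rank_fromBlocks_shiftMatrix (q a b c : ℕ) :
    (fromBlocks (shiftMatrix K q a) (shiftMatrix K q b) 0 (shiftMatrix K q c)).rank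
      = (q - min a (min b c)) + (q - (a + c - min a (min b c))) := by
  rcases le_or_gt a b with hab | hba
  · rw [rank_fromBlocks_zero₂₁_of_eq_mul_left _ _ _ (shiftMatrix K q (b - a))
      (by rw [shiftMatrix_mul, Nat.add_sub_cancel' hab]),
      rank_fromBlocks_zero₁₂_zero₂₁, rank_shiftMatrix, rank_shiftMatrix]
    omega
  rcases le_or_gt c b with hcb | hbc
  · rw [rank_fromBlocks_zero₂₁_of_eq_mul_right _ _ _ (shiftMatrix K q (b - c))
      (by rw [shiftMatrix_mul, Nat.sub_add_cancel hcb]),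
      rank_fromBlocks_zero₁₂_zero₂₁, rank_shiftMatrix, rank_shiftMatrix]
    omega
  rw [rank_fromBlocks_zero₂₁_of_eq_mul_of_eq_mul _ _ _ (shiftMatrix K q (a - b))
      (shiftMatrix K q (c - b)) (by rw [shiftMatrix_mul, Nat.add_sub_cancel' hba.le])
      (by rw [shiftMatrix_mul, Nat.sub_add_cancel hbc.le]),
    shiftMatrix_mul, rank_fromBlocks_zero₁₁_zero₂₂, rank_shiftMatrix, rank_shiftMatrix]
  omega

end ShiftMatrix

theorem rank_block_triangular_shift (q m11 m12 m22 : ℕ)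
    (h1 : m11 ≤ q) (h2 : m12 ≤ q) (h3 : m22 ≤ q)
    (J : Matrix (Fin q) (Fin q) (ZMod 2))
    (hJ : ∀ i j : Fin q, J i j = if (i : ℕ) = (j : ℕ) + 1 then 1 else 0) :
    (Matrix.fromBlocks (J ^ (q - m11)) (J ^ (q - m12)) 0 (J ^ (q - m22))).rank
      = max (m11 + m22) m12 := by
  rw [pow_eq_shiftMatrix hJ, pow_eq_shiftMatrix hJ, pow_eq_shiftMatrix hJ,
    rank_fromBlocks_shiftMatrix]
  omega
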